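/- arXiv:1705.04901 — 6 statements merged into one kernel-verified Lean document; each statement's English description precedes it below -/
import Mathlib

section
/- Let L be a finite lattice with a lattice congruence Θ, and let x ∈ L be the minimum element of its Θ-equivalence class. Then the map y ↦ [y]_Θ restricts to a bijection from the set of elements of L covered by x to the set of elements of the quotient lattice L/Θ covered by [x]_Θ. -/
/-- The order relation induced on `Θ`-classes: `[a] ≤ [b]` iff `a ⊔ b ≡ b mod Θ`. -/
def qle {L : Type*} [Lattice L] (Θ : L → L → Prop) (a b : L) : Prop :=
  Θ (a ⊔ b) b

/-- `[a]` is covered by `[b]` in the quotient lattice `L/Θ`. -/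
def qcov {L : Type*} [Lattice L] (Θ : L → L → Prop) (a b : L) : Prop :=
  qle Θ a b ∧ ¬ Θ a b ∧ ∀ z : L, qle Θ a z → qle Θ z b → (Θ z a ∨ Θ z b)

/-- if `x` is the minimum of its `Θ`-class, then `y ↦ [y]_Θ` is a bijection
from the lower covers of `x` in `L` to the lower covers of `[x]_Θ` in `L/Θ`. -/
theorem stmt_3 {L : Type*} [Lattice L] [Fintype L] (Θ : L → L → Prop)
    (hΘ : Equivalence Θ)
    (hcong : ∀ x y z : L, Θ x y → Θ (x ⊓ z) (y ⊓ z) ∧ Θ (x ⊔ z) (y ⊔ z))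
    (x : L) (hmin : ∀ z, Θ x z → x ≤ z) :
    (∀ y : L, y ⋖ x → qcov Θ y x) ∧
    (∀ y y' : L, y ⋖ x → y' ⋖ x → Θ y y' → y = y') ∧
    (∀ z : L, qcov Θ z x → ∃ y : L, y ⋖ x ∧ Θ y z) := by
  refine ⟨?_, ?_, ?_⟩
  · -- Part 1
    intro y hy
    refine ⟨?_, ?_, ?_⟩
    · show Θ (y ⊔ x) x
      rw [sup_eq_right.2 hy.le]; exact hΘ.refl x
    · intro h
      exact hy.lt.not_ge (hmin y (hΘ.symm h))
    · intro u h1 h2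
      -- h1 : Θ (y ⊔ u) u, h2 : Θ (u ⊔ x) x
      -- u ≡ u ⊓ x ≡ (y ⊔ u) ⊓ x, which is y or x
      have hux : Θ u (u ⊓ x) := by
        have := (hcong _ _ u h2).1
        rw [inf_comm (u ⊔ x) u, inf_sup_self, inf_comm x u] at this
        exact this
      have h3 : Θ (u ⊓ x) ((y ⊔ u) ⊓ x) := by
        have := (hcong _ _ x (hΘ.symm h1)).1
        exact this
      have hyu : y ≤ (y ⊔ u) ⊓ x := le_inf le_sup_left hy.le
      have hle : (y ⊔ u) ⊓ x ≤ x := inf_le_right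
      rcases hle.eq_or_lt with heq | hlt
      · right; rw [← heq]; exact hΘ.trans hux h3
      · left
        have : (y ⊔ u) ⊓ x = y := le_antisymm (by
          by_contra hne
          exact hy.2 (lt_of_le_of_ne hyu (fun h => hne (h ▸ le_rfl))) hlt) hyu
        rw [← this]; exact hΘ.trans hux h3
  · -- Part 2
    intro y y' hy hy' h
    by_contra hne
    have hsup : Θ (y ⊔ y') y' := by
      have := (hcong _ _ y' h).2
      rwa [sup_idem] at this
    have hle : y ⊔ y' ≤ x := sup_le hy.le hy'.le
    have hlt : y < y ⊔ y' := by
      rcases lt_or_eq_of_le (le_sup_left : y ≤ y ⊔ y') with h1 | h1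
      · exact h1
      · exfalso
        have : y' ≤ y := by rw [h1]; exact le_sup_right
        rcases this.eq_or_lt with h2 | h2
        · exact hne (h2 ▸ rfl)
        · exact hy'.2 h2 hy.lt
    have hx : y ⊔ y' = x := by
      rcases hle.eq_or_lt with h1 | h1
      · exact h1
      · exact absurd h1 (hy.2 hlt)
    have : Θ x y' := hx ▸ hsup
    exact hy'.lt.not_ge (hmin y' this)
  · -- Part 3
    intro z hz
    obtain ⟨hzx, hnzx, hcov⟩ := hz
    have hw : Θ z (x ⊓ z) := by
      have := (hcong _ _ z hzx).1
      rwa [inf_comm (z ⊔ x) z, inf_sup_self] at this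
    have hwlt : x ⊓ z < x := by
      rcases (inf_le_left : x ⊓ z ≤ x).eq_or_lt with h1 | h1
      · exfalso; exact hnzx (h1 ▸ hw)
      · exact h1
    obtain ⟨y, hwy, hyx⟩ := exists_le_covBy_of_lt hwlt
    refine ⟨y, hyx, ?_⟩
    have h1 : qle Θ z y := by
      show Θ (z ⊔ y) y
      have := (hcong _ _ y hw).2
      rwa [sup_eq_right.2 hwy] at this
    have h2 : qle Θ y x := by
      show Θ (y ⊔ x) x
      rw [sup_eq_right.2 hyx.le]; exact hΘ.refl x
    rcases hcov y h1 h2 with h | h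
    · exact h
    · exact absurd (hmin y (hΘ.symm h)) hyx.lt.not_ge
end

section
/- Fix n ≥ 1 and let S = { (i,j) : 1 ≤ i < j ≤ n }. The collection Bic(n) of biclosed subsets of S (X closed and S\X closed, where closed means (i,j),(j,k) ∈ X ⇒ (i,k) ∈ X), ordered by inclusion, is a graded lattice whose rank function is X ↦ |X|; in particular, in any covering relation X ⋖ Y in Bic(n) one has |Y| = |X| + 1. -/
/-- A biclosed subset of `S = {(i,j) : i < j}` in `Fin n × Fin n`: it consists of
pairs `(i,j)` with `i < j`, it is closed under composition
`(i,j),(j,k) ↦ (i,k)`, and its complement in `S` is also closed. -/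
def Biclosed (n : ℕ) (X : Finset (Fin n × Fin n)) : Prop :=
  (∀ p ∈ X, p.1 < p.2) ∧
  (∀ i j k : Fin n, (i, j) ∈ X → (j, k) ∈ X → (i, k) ∈ X) ∧
  (∀ i j k : Fin n, i < j → j < k → (i, j) ∉ X → (j, k) ∉ X → (i, k) ∉ X)

/-!
The join of two biclosed sets is the transitive closure of their union: the union is co-closed,
and co-closedness survives taking transitive closures. The meet then exists because a finite
join-semilattice with a bottom is a lattice.

For grading, a biclosed set `X` is the inversion set of a total order `≺` on `Fin n`, with rank
function `r`. Given biclosed `X ⊊ Y`, pick `(a, b) ∈ Y \ X` minimising `r b - r a`; then no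
other pair of `Y \ X` lies within the rank interval `[r a, r b]`, and this is exactly what is
needed for `X ∪ {(a, b)}` to be biclosed. So covers add a single pair.
-/

noncomputable abbrev SemilatticeSup.toCompleteLatticeOfFinite (α : Type*) [SemilatticeSup α]
    [OrderBot α] [Finite α] : CompleteLattice α :=
  @completeLatticeOfSup α _ ⟨fun s => s.toFinite.toFinset.sup id⟩ fun s => by
    simpa using Finset.isLUB_sup_id (s := s.toFinite.toFinset)

theorem Relation.TransGen.or_of_lt {α : Type*} [LinearOrder α] {r : α → α → Prop}
    (hr : ∀ {i j k}, i < j → j < k → r i k → r i j ∨ r j k) {i k : α} (h : TransGen r i k) :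
    ∀ {j}, i < j → j < k → TransGen r i j ∨ TransGen r j k := by
  induction h with
  | single h =>
    intro j hij hjk
    exact (hr hij hjk h).imp .single .single
  | @tail m k hm hmk ih =>
    intro j hij hjk
    rcases lt_trichotomy j m with hjm | rfl | hmj
    · exact (ih hij hjm).imp_right (·.tail hmk)
    · exact .inl hm
    · exact (hr hmj hjk hmk).imp hm.tail .single

theorem Finset.card_filter_lt_card_filter_of_rel {α : Type*} [Fintype α] {r : α → α → Prop}
    [IsStrictOrder α r] [DecidableRel r] {a b : α} (h : r a b) :
    ({x | r x a} : Finset α).card < ({x | r x b} : Finset α).card := by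
  refine Finset.card_lt_card ⟨fun x hx => ?_, fun hsub => ?_⟩
  · simp only [Finset.mem_filter, Finset.mem_univ, true_and] at hx ⊢
    exact _root_.trans hx h
  · exact irrefl a (by simpa using hsub (by simpa using h))

variable {n : ℕ} {X Y Z : Finset (Fin n × Fin n)} {i j k : Fin n}

open Classical in
noncomputable def transClosure (Z : Finset (Fin n × Fin n)) : Finset (Fin n × Fin n) :=
  {p | Relation.TransGen (fun i j => (i, j) ∈ Z) p.1 p.2}

theorem mem_transClosure :
    (i, k) ∈ transClosure Z ↔ Relation.TransGen (fun i j => (i, j) ∈ Z) i k := by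
  simp [transClosure]

theorem subset_transClosure : Z ⊆ transClosure Z := fun ⟨_, _⟩ h =>
  mem_transClosure.2 (.single h)

theorem biclosed_transClosure (hlt : ∀ p ∈ Z, p.1 < p.2)
    (hsplit : ∀ {i j k}, i < j → j < k → (i, k) ∈ Z → (i, j) ∈ Z ∨ (j, k) ∈ Z) :
    Biclosed n (transClosure Z) := by
  refine ⟨fun ⟨i, k⟩ hik => ?_, fun i j k hij hjk => ?_, fun i j k hij hjk hij' hjk' hik => ?_⟩
  · exact Relation.transGen_minimal (fun a b hab => hlt (a, b) hab) _ _ (mem_transClosure.1 hik)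
  · exact mem_transClosure.2 ((mem_transClosure.1 hij).trans (mem_transClosure.1 hjk))
  · rcases (mem_transClosure.1 hik).or_of_lt hsplit hij hjk with h | h
    exacts [hij' (mem_transClosure.2 h), hjk' (mem_transClosure.2 h)]

/-- For biclosed `X`, the strict total order on `Fin n` whose inversion set is `X`. -/
def invLT (X : Finset (Fin n × Fin n)) (i j : Fin n) : Prop :=
  i < j ∧ (i, j) ∉ X ∨ j < i ∧ (j, i) ∈ X

open Classical in
noncomputable def invRank (X : Finset (Fin n × Fin n)) (i : Fin n) : ℕ :=
  ({j | invLT X j i} : Finset (Fin n)).card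

namespace Biclosed

theorem lt (hX : Biclosed n X) (h : (i, j) ∈ X) : i < j := hX.1 _ h

theorem trans (hX : Biclosed n X) (hij : (i, j) ∈ X) (hjk : (j, k) ∈ X) : (i, k) ∈ X :=
  hX.2.1 i j k hij hjk

theorem mem_or_mem (hX : Biclosed n X) (hij : i < j) (hjk : j < k) (h : (i, k) ∈ X) :
    (i, j) ∈ X ∨ (j, k) ∈ X := by
  by_contra! h'
  exact hX.2.2 i j k hij hjk h'.1 h'.2 h

theorem empty : Biclosed n ∅ := ⟨by simp, by simp, by simp⟩

theorem transClosure_subset (hX : Biclosed n X) (h : Z ⊆ X) : transClosure Z ⊆ X := by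
  have : IsTrans (Fin n) fun i j => (i, j) ∈ X := ⟨fun _ _ _ => hX.trans⟩
  rintro ⟨i, k⟩ hik
  exact Relation.transGen_minimal (r' := fun i j => (i, j) ∈ X) (fun _ _ hab => h hab) _ _
    (mem_transClosure.1 hik)

theorem sup (hX : Biclosed n X) (hY : Biclosed n Y) : Biclosed n (transClosure (X ∪ Y)) := by
  refine biclosed_transClosure (fun p hp => ?_) fun hij hjk hik => ?_
  · rcases Finset.mem_union.1 hp with h | h
    exacts [hX.1 p h, hY.1 p h]
  · simp only [Finset.mem_union] at hik ⊢
    rcases hik with h | h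
    · rcases hX.mem_or_mem hij hjk h with h' | h' <;> simp [h']
    · rcases hY.mem_or_mem hij hjk h with h' | h' <;> simp [h']

theorem invLT_trans (hX : Biclosed n X) (hij : invLT X i j) (hjk : invLT X j k) :
    invLT X i k := by
  rcases hij with ⟨hij, mij⟩ | ⟨hji, mji⟩ <;> rcases hjk with ⟨hjk, mjk⟩ | ⟨hkj, mkj⟩
  · exact .inl ⟨hij.trans hjk, hX.2.2 i j k hij hjk mij mjk⟩
  · rcases lt_trichotomy i k with hik | rfl | hki
    · exact .inl ⟨hik, fun h => mij (hX.trans h mkj)⟩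
    · exact absurd mkj mij
    · exact .inr ⟨hki, (hX.mem_or_mem hki hij mkj).resolve_right mij⟩
  · rcases lt_trichotomy i k with hik | rfl | hki
    · exact .inl ⟨hik, fun h => mjk (hX.trans mji h)⟩
    · exact absurd mji mjk
    · exact .inr ⟨hki, (hX.mem_or_mem hjk hki mji).resolve_left mjk⟩
  · exact .inr ⟨hkj.trans hji, hX.trans mkj mji⟩

theorem isStrictOrder_invLT (hX : Biclosed n X) : IsStrictOrder (Fin n) (invLT X) where
  irrefl _ h := by simp [invLT] at h
  trans _ _ _ := hX.invLT_trans

theorem invRank_lt_invRank (hX : Biclosed n X) (h : invLT X i j) :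
    invRank X i < invRank X j := by
  classical
  have := hX.isStrictOrder_invLT
  exact Finset.card_filter_lt_card_filter_of_rel h

theorem invRank_lt_invRank_of_notMem (hX : Biclosed n X) (hij : i < j) (h : (i, j) ∉ X) :
    invRank X i < invRank X j :=
  hX.invRank_lt_invRank (.inl ⟨hij, h⟩)

theorem mem_iff_invRank_lt (hX : Biclosed n X) (hij : i < j) :
    (i, j) ∈ X ↔ invRank X j < invRank X i := by
  refine ⟨fun h => hX.invRank_lt_invRank (.inr ⟨hij, h⟩), fun h => ?_⟩
  by_contra h'
  exact lt_asymm h (hX.invRank_lt_invRank_of_notMem hij h')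

theorem insert_of_forall_le {a b : Fin n} (hX : Biclosed n X) (hY : Biclosed n Y) (hXY : X ⊆ Y)
    (haY : (a, b) ∈ Y) (haX : (a, b) ∉ X)
    (hmin : ∀ i k, (i, k) ∈ Y → (i, k) ∉ X →
      invRank X b - invRank X a ≤ invRank X k - invRank X i) :
    Biclosed n (insert (a, b) X) := by
  have hab : a < b := hY.lt haY
  have key : ∀ i k, (i, k) ∈ Y → (i, k) ∉ X → invRank X a ≤ invRank X i →
      invRank X k ≤ invRank X b → invRank X i = invRank X a ∧ invRank X k = invRank X b := by
    intro i k hY' hX' hai hkb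
    have := hX.invRank_lt_invRank_of_notMem (hY.lt hY') hX'
    have := hmin i k hY' hX'
    omega
  refine ⟨fun p hp => ?_, fun i j k hij hjk => ?_, fun i j k hij hjk hij' hjk' hik => ?_⟩
  · rcases Finset.mem_insert.1 hp with rfl | hp
    exacts [hab, hX.lt hp]
  · simp only [Finset.mem_insert, Prod.mk.injEq] at hij hjk ⊢
    rcases hij with ⟨rfl, rfl⟩ | hij <;> rcases hjk with ⟨rfl, rfl⟩ | hjk
    · exact absurd hab (lt_irrefl _)
    · refine .inr (by_contra fun hik => ?_)
      have hbk := (hX.mem_iff_invRank_lt (hX.lt hjk)).1 hjk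
      have := key i k (hY.trans haY (hXY hjk)) hik le_rfl hbk.le
      omega
    · refine .inr (by_contra fun hik => ?_)
      have hia := (hX.mem_iff_invRank_lt (hX.lt hij)).1 hij
      have := key i k (hY.trans (hXY hij) haY) hik hia.le le_rfl
      omega
    · exact .inr (hX.trans hij hjk)
  · simp only [Finset.mem_insert, Prod.mk.injEq, not_or] at hij' hjk' hik
    rcases hik with ⟨rfl, rfl⟩ | hik
    · have hij_rank := hX.invRank_lt_invRank_of_notMem hij hij'.2
      have hjk_rank := hX.invRank_lt_invRank_of_notMem hjk hjk'.2
      rcases hY.mem_or_mem hij hjk haY with h | h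
      · have := key i j h hij'.2 le_rfl hjk_rank.le
        omega
      · have := key j k h hjk'.2 hij_rank.le le_rfl
        omega
    · exact hX.2.2 i j k hij hjk hij'.2 hjk'.2 hik

theorem exists_insert (hX : Biclosed n X) (hY : Biclosed n Y) (hXY : X ⊂ Y) :
    ∃ p ∈ Y \ X, Biclosed n (insert p X) := by
  obtain ⟨⟨a, b⟩, hp, hmin⟩ := Finset.exists_min_image (Y \ X)
    (fun p => invRank X p.2 - invRank X p.1) (Finset.sdiff_nonempty.2 hXY.2)
  rw [Finset.mem_sdiff] at hp
  exact ⟨_, Finset.mem_sdiff.2 hp, hX.insert_of_forall_le hY hXY.1 hp.1 hp.2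
    fun i k hiY hiX => hmin (i, k) (Finset.mem_sdiff.2 ⟨hiY, hiX⟩)⟩

end Biclosed

abbrev Bic (n : ℕ) := {X : Finset (Fin n × Fin n) // Biclosed n X}

namespace Bic

noncomputable instance : SemilatticeSup (Bic n) where
  sup a b := ⟨transClosure (a.1 ∪ b.1), a.2.sup b.2⟩
  le_sup_left _ _ := Finset.subset_union_left.trans subset_transClosure
  le_sup_right _ _ := Finset.subset_union_right.trans subset_transClosure
  sup_le _ _ c hac hbc := c.2.transClosure_subset (Finset.union_subset hac hbc)

instance : OrderBot (Bic n) where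
  bot := ⟨∅, Biclosed.empty⟩
  bot_le a := Finset.empty_subset a.1

theorem card_eq_of_covBy {a b : Bic n} (h : a ⋖ b) : b.1.card = a.1.card + 1 := by
  obtain ⟨p, hp, hc⟩ := a.2.exists_insert b.2 h.lt
  rw [Finset.mem_sdiff] at hp
  let c : Bic n := ⟨insert p a.1, hc⟩
  have hac : a < c := Finset.ssubset_insert hp.2
  have hcb : c ≤ b := Finset.insert_subset hp.1 h.le
  have hbc : b = c := ((h.eq_or_eq hac.le hcb).resolve_left hac.ne').symm
  rw [hbc, Finset.card_insert_of_notMem hp.2]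

end Bic

theorem stmt_6_general (n : ℕ) :
    ∃ inst : Lattice {X : Finset (Fin n × Fin n) // Biclosed n X},
      (∀ a b : {X : Finset (Fin n × Fin n) // Biclosed n X},
        (letI := inst; a ≤ b) ↔ a.1 ⊆ b.1) ∧
      (∀ a b : {X : Finset (Fin n × Fin n) // Biclosed n X},
        (letI := inst; a ⋖ b) → b.1.card = a.1.card + 1) :=
  ⟨(SemilatticeSup.toCompleteLatticeOfFinite (Bic n)).toLattice, fun _ _ => Iff.rfl,
    fun _ _ => Bic.card_eq_of_covBy⟩

/-- `Bic(n)`, ordered by inclusion, is a lattice graded by cardinality: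
in every covering relation the cardinality goes up by exactly one. -/
theorem stmt_6 (n : ℕ) (hn : 1 ≤ n) :
    ∃ inst : Lattice {X : Finset (Fin n × Fin n) // Biclosed n X},
      (∀ a b : {X : Finset (Fin n × Fin n) // Biclosed n X},
        (letI := inst; a ≤ b) ↔ a.1 ⊆ b.1) ∧
      (∀ a b : {X : Finset (Fin n × Fin n) // Biclosed n X},
        (letI := inst; a ⋖ b) → b.1.card = a.1.card + 1) :=
  stmt_6_general n
end

section
/- Fix n ≥ 1 and let S = { (i,j) : 1 ≤ i < j ≤ n }. Call T ⊆ S wide if: (a) for all i < j < k, the set T ∩ {(i,j),(j,k),(i,k)} does not have exactly two elements, and (b) whenever (i,j) ∈ T and (k,l) ∈ T with k ≤ i < l ≤ j, one has (i,l) ∈ T. Then T is wide if and only if there exists a noncrossing partition B of [n] such that T = { (i,j) : i < j and i, j lie in the same block of B }. -/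
/-- A wide set of pairs: (a) no triple `(i,j),(j,k),(i,k)` (for `i < j < k`) meets `T`
in exactly two elements; (b) if `(i,j) ∈ T` and `(k,l) ∈ T` with `k ≤ i < l ≤ j`,
then `(i,l) ∈ T`. -/
def Wide (n : ℕ) (T : Set (Fin n × Fin n)) : Prop :=
  (∀ i j k : Fin n, i < j → j < k →
    ¬ (((i, j) ∈ T ∧ (j, k) ∈ T ∧ (i, k) ∉ T) ∨
       ((i, j) ∈ T ∧ (i, k) ∈ T ∧ (j, k) ∉ T) ∨
       ((j, k) ∈ T ∧ (i, k) ∈ T ∧ (i, j) ∉ T))) ∧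
  (∀ i j k l : Fin n, (i, j) ∈ T → (k, l) ∈ T → k ≤ i → i < l → l ≤ j →
    (i, l) ∈ T)

/-- `T ⊆ {(i,j) : i < j}` is wide iff there is a noncrossing partition
(equivalence relation) `r` of `Fin n` with `T = {(i,j) : i < j, i ∼ j}`. -/
theorem stmt_7 (n : ℕ) (hn : 1 ≤ n) (T : Set (Fin n × Fin n))
    (hT : ∀ p ∈ T, p.1 < p.2) :
    Wide n T ↔
      ∃ r : Setoid (Fin n),
        (∀ i j k l : Fin n, i < j → j < k → k < l → r.r i k → r.r j l → r.r i j) ∧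
        T = {p : Fin n × Fin n | p.1 < p.2 ∧ r.r p.1 p.2} := by
  constructor
  · rintro ⟨ha, hb⟩
    have t1 : ∀ a b c : Fin n, a < b → b < c → (a,b) ∈ T → (b,c) ∈ T → (a,c) ∈ T := by
      intro a b c h1 h2 m1 m2; have := ha a b c h1 h2; tauto
    have t2 : ∀ a b c : Fin n, a < b → b < c → (a,b) ∈ T → (a,c) ∈ T → (b,c) ∈ T := by
      intro a b c h1 h2 m1 m2; have := ha a b c h1 h2; tauto
    have t3 : ∀ a b c : Fin n, a < b → b < c → (b,c) ∈ T → (a,c) ∈ T → (a,b) ∈ T := by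
      intro a b c h1 h2 m1 m2; have := ha a b c h1 h2; tauto
    set R : Fin n → Fin n → Prop := fun i j => i = j ∨ (i,j) ∈ T ∨ (j,i) ∈ T with hR
    have hnorm : ∀ a b : Fin n, a < b → R a b → (a,b) ∈ T := by
      intro a b hab h
      rcases h with h | h | h
      · exact absurd hab (by simp [h])
      · exact h
      · exact absurd (hT _ h) (by simp; exact le_of_lt hab)
    have hrefl : ∀ a : Fin n, R a a := fun a => Or.inl rfl
    have hsymm : ∀ a b : Fin n, R a b → R b a := by
      intro a b h; rcases h with h | h | h
      · exact Or.inl h.symm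
      · exact Or.inr (Or.inr h)
      · exact Or.inr (Or.inl h)
    have htrans : ∀ a b c : Fin n, R a b → R b c → R a c := by
      intro i j k hij hjk
      rcases eq_or_ne i j with rfl | hij' ; · exact hjk
      rcases eq_or_ne j k with rfl | hjk' ; · exact hij
      rcases eq_or_ne i k with rfl | hik' ; · exact hrefl i
      rcases lt_or_gt_of_ne hij' with h1 | h1 <;>
        rcases lt_or_gt_of_ne hjk' with h2 | h2 <;>
        rcases lt_or_gt_of_ne hik' with h3 | h3
      · exact Or.inr (Or.inl (t1 i j k h1 h2 (hnorm _ _ h1 hij) (hnorm _ _ h2 hjk)))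
      · exact absurd (h1.trans h2) (by omega)
      · -- i < j, k < j, i < k : i < k < j
        exact Or.inr (Or.inl (t3 i k j h3 h2 (hnorm _ _ h2 (hsymm _ _ hjk))
          (hnorm _ _ h1 hij)))
      · -- i < j, k < j, k < i : k < i < j
        exact Or.inr (Or.inr (t3 k i j h3 h1 (hnorm _ _ h1 hij)
          (hnorm _ _ (h3.trans h1) (hsymm _ _ hjk))))
      · -- j < i, j < k, i < k
        exact Or.inr (Or.inl (t2 j i k h1 h3 (hnorm _ _ h1 (hsymm _ _ hij))
          (hnorm _ _ h2 hjk)))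
      · -- j < i, j < k, k < i
        exact Or.inr (Or.inr (t2 j k i h2 h3 (hnorm _ _ h2 hjk)
          (hnorm _ _ h1 (hsymm _ _ hij))))
      · exact absurd (h2.trans h1) (by omega)
      · -- j < i, k < j : k < j < i
        exact Or.inr (Or.inr (t1 k j i h2 h1 (hnorm _ _ h2 (hsymm _ _ hjk))
          (hnorm _ _ h1 (hsymm _ _ hij))))
    refine ⟨⟨R, hrefl, fun {a b} h => hsymm a b h, fun {a b c} h h' => htrans a b c h h'⟩,
      ?_, ?_⟩
    · -- noncrossing
      intro i j k l hij hjk hkl rik rjl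
      have hik : (i,k) ∈ T := hnorm _ _ (hij.trans hjk) rik
      have hjl : (j,l) ∈ T := hnorm _ _ (hjk.trans hkl) rjl
      -- apply (b): (j,l) ∈ T, (i,k) ∈ T, i ≤ j < k ≤ l ⇒ (j,k) ∈ T
      have hjkT : (j,k) ∈ T := hb j l i k hjl hik (le_of_lt hij) hjk (le_of_lt hkl)
      exact Or.inr (Or.inl (t3 i j k hij hjk hjkT hik))
    · ext p
      constructor
      · intro hp
        exact ⟨hT p hp, Or.inr (Or.inl hp)⟩
      · rintro ⟨hlt, hr⟩
        exact hnorm p.1 p.2 hlt hr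
  · rintro ⟨r, hnc, rfl⟩
    have rsymm : ∀ a b : Fin n, r.r a b → r.r b a := fun a b h => r.symm h
    have rtrans : ∀ a b c : Fin n, r.r a b → r.r b c → r.r a c :=
      fun a b c h h' => r.trans h h'
    constructor
    · intro i j k hij hjk h
      simp only [Set.mem_setOf_eq] at h
      rcases h with ⟨⟨_, h1⟩, ⟨_, h2⟩, h3⟩ | ⟨⟨_, h1⟩, ⟨_, h2⟩, h3⟩ | ⟨⟨_, h1⟩, ⟨_, h2⟩, h3⟩
      · exact h3 ⟨hij.trans hjk, rtrans _ _ _ h1 h2⟩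
      · exact h3 ⟨hjk, rtrans _ _ _ (rsymm _ _ h1) h2⟩
      · exact h3 ⟨hij, rtrans _ _ _ h2 (rsymm _ _ h1)⟩
    · intro i j k l hijT hklT hki hil hlj
      simp only [Set.mem_setOf_eq] at *
      obtain ⟨hij, rij⟩ := hijT
      obtain ⟨hkl, rkl⟩ := hklT
      refine ⟨hil, ?_⟩
      rcases eq_or_lt_of_le hki with rfl | hki'
      · exact rkl
      rcases eq_or_lt_of_le hlj with rfl | hlj'
      · exact rij
      -- k < i < l < j : noncrossing with (k,i,l,j)
      have rki : r.r k i := hnc k i l j hki' hil hlj' rkl rij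
      exact rtrans _ _ _ (rsymm _ _ rki) rkl
end

section
/- Fix n ≥ 2. The number of antichains in the poset P_n of pairs { (i,j) : 1 ≤ i < j ≤ n } ordered by (i,j) ≤ (k,l) iff k ≤ i and j ≤ l (containment of intervals) equals the Catalan number C_n = (1/(n+1))·binom(2n, n). -/
/-!
An antichain of a finite poset is the set of maximal elements of a unique lower set, so it
suffices to count lower sets of `P_n`. A lower set `I` of intervals is determined by the
monotone function `f i = max ({i} ∪ {j | [i, j] ∈ I})`, since `[i, j] ∈ I ↔ j ≤ f i`; these
"staircase" functions `f ≥ id` are Dyck paths in disguise. Splitting a staircase on `Fin (n + 1)`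
at its first fixed point `m` leaves a staircase on `[0, m)` (shifted down by one) and one on
`(m, n]`, which is the Catalan recursion `C (n + 1) = ∑ C m * C (n - m)`.
-/

open Finset

section AntichainLowerSet

variable (α : Type*) [PartialOrder α]

noncomputable def antichainEquivLowerSet [Finite α] :
    {s : Set α // IsAntichain (· ≤ ·) s} ≃ LowerSet α where
  toFun s := lowerClosure s.1
  invFun I := ⟨{x | Maximal (· ∈ I) x}, setOfPred_maximal_antichain _⟩
  left_inv s := Subtype.ext <| Set.ext fun _ => s.2.maximal_mem_lowerClosure_iff_mem
  right_inv I := SetLike.ext fun x => by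
    refine ⟨fun ⟨y, hy, hxy⟩ => I.lower hxy hy.prop, fun hx => ?_⟩
    obtain ⟨y, hxy, hy⟩ := Finite.exists_le_maximal (p := (· ∈ I)) hx
    exact ⟨y, hy, hxy⟩

noncomputable def finsetAntichainEquivLowerSet [Fintype α] :
    {A : Finset α // IsAntichain (· ≤ ·) (A : Set α)} ≃ LowerSet α :=
  (Fintype.finsetEquivSet.subtypeEquiv fun _ => Iff.rfl).trans (antichainEquivLowerSet α)

end AntichainLowerSet

abbrev Staircase (n : ℕ) := {f : Fin n → Fin n // Monotone f ∧ ∀ i, i ≤ f i}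

namespace Staircase

variable {n : ℕ}

-- Extending by the identity beyond `n` lets the cutting and gluing below be done in `ℕ`.
def app (f : Staircase n) (i : ℕ) : ℕ := if h : i < n then f.1 ⟨i, h⟩ else i

lemma app_fin (f : Staircase n) (i : Fin n) : f.app i = f.1 i := by simp [app]

lemma app_of_le (f : Staircase n) {i : ℕ} (hi : n ≤ i) : f.app i = i := by
  simp [app, hi.not_gt]

lemma app_lt (f : Staircase n) {i : ℕ} (hi : i < n) : f.app i < n := by
  simp [app, hi]

lemma le_app (f : Staircase n) (i : ℕ) : i ≤ f.app i := by
  unfold app; split_ifs with hi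
  · exact f.2.2 ⟨i, hi⟩
  · exact le_rfl

lemma app_mono (f : Staircase n) : Monotone f.app := by
  intro i j hij
  by_cases hj : j < n
  · have h := f.2.1 (Fin.mk_le_mk.2 hij : (⟨i, by omega⟩ : Fin n) ≤ ⟨j, hj⟩)
    rwa [Fin.le_def, ← app_fin, ← app_fin] at h
  · rw [f.app_of_le (not_lt.1 hj)]
    by_cases hi : i < n
    · exact ((f.app_lt hi).trans_le (not_lt.1 hj)).le
    · rw [f.app_of_le (not_lt.1 hi)]; exact hij

lemma ext {f g : Staircase n} (h : ∀ i < n, f.app i = g.app i) : f = g :=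
  Subtype.ext <| funext fun i => Fin.ext <| by rw [← app_fin, ← app_fin, h i i.2]

def ofApp (F : ℕ → ℕ) (hmono : ∀ i j, i ≤ j → j < n → F i ≤ F j) (hle : ∀ i < n, i ≤ F i)
    (hlt : ∀ i < n, F i < n) : Staircase n :=
  ⟨fun i => ⟨F i, hlt i i.2⟩, fun i j hij => hmono i j hij j.2, fun i => hle i i.2⟩

lemma app_ofApp {F : ℕ → ℕ} {hmono hle hlt} {i : ℕ} (hi : i < n) :
    (ofApp F hmono hle hlt : Staircase n).app i = F i := by
  simp [app, ofApp, hi]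

lemma app_self_of_succ (f : Staircase (n + 1)) : f.app n = n :=
  le_antisymm (Nat.lt_succ_iff.1 (f.app_lt n.lt_succ_self)) (f.le_app n)

lemma exists_app_eq_self (f : Staircase (n + 1)) : ∃ i, f.app i = i :=
  ⟨n, f.app_self_of_succ⟩

def firstFixedPoint (f : Staircase (n + 1)) : Fin (n + 1) :=
  ⟨Nat.find f.exists_app_eq_self, Nat.lt_succ_of_le (Nat.find_min' _ f.app_self_of_succ)⟩

lemma firstFixedPoint_eq_iff {f : Staircase (n + 1)} {m : Fin (n + 1)} :
    f.firstFixedPoint = m ↔ f.app m = m ∧ ∀ j < (m : ℕ), j < f.app j := by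
  rw [firstFixedPoint, Fin.ext_iff, Nat.find_eq_iff]
  refine and_congr_right fun _ => forall₂_congr fun j _ => ?_
  exact ⟨(f.le_app j).lt_of_ne', ne_of_gt⟩

section Split

variable {m : ℕ}

def leftPart (f : Staircase (n + 1)) (hfm : f.app m = m) (hlt : ∀ j < m, j < f.app j) :
    Staircase m :=
  ofApp (fun j => f.app j - 1)
    (fun i j hij _ => Nat.sub_le_sub_right (f.app_mono hij) 1)
    (fun j hj => Nat.le_sub_one_of_lt (hlt j hj))
    (fun j hj => by have := f.app_mono hj.le; have := hlt j hj; omega)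

def rightPart (f : Staircase (n + 1)) (m : ℕ) : Staircase (n - m) :=
  ofApp (fun k => f.app (m + 1 + k) - (m + 1))
    (fun i j hij _ => Nat.sub_le_sub_right (f.app_mono (by omega)) _)
    (fun k _ => by have := f.le_app (m + 1 + k); omega)
    (fun k hk => by have := f.app_lt (i := m + 1 + k) (by omega); omega)

def glue (hm : m ≤ n) (g : Staircase m) (h : Staircase (n - m)) : Staircase (n + 1) :=
  ofApp
    (fun j => if j < m then g.app j + 1 else if m < j then h.app (j - (m + 1)) + (m + 1) else j)
    (fun i j hij _ => by
      have := g.app_mono hij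
      have := h.app_mono (Nat.sub_le_sub_right hij (m + 1))
      have := g.app_lt (i := i)
      have := h.le_app (j - (m + 1))
      split_ifs <;> omega)
    (fun j _ => by
      have := g.le_app j
      have := h.le_app (j - (m + 1))
      split_ifs <;> omega)
    (fun j hj => by
      have := g.app_lt (i := j)
      have := h.app_lt (i := j - (m + 1))
      split_ifs <;> omega)

lemma app_leftPart {f : Staircase (n + 1)} {hfm : f.app m = m} {hlt : ∀ j < m, j < f.app j}
    {j : ℕ} (hj : j < m) :
    (leftPart f hfm hlt).app j = f.app j - 1 :=
  app_ofApp hj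

lemma app_rightPart {f : Staircase (n + 1)} {k : ℕ} (hk : k < n - m) :
    (rightPart f m).app k = f.app (m + 1 + k) - (m + 1) :=
  app_ofApp hk

lemma app_glue {hm : m ≤ n} {g : Staircase m} {h : Staircase (n - m)} {j : ℕ}
    (hj : j < n + 1) :
    (glue hm g h).app j =
      if j < m then g.app j + 1 else if m < j then h.app (j - (m + 1)) + (m + 1) else j :=
  app_ofApp hj

end Split

def firstFixedPointFiberEquiv (m : Fin (n + 1)) :
    {f : Staircase (n + 1) // f.firstFixedPoint = m} ≃ Staircase m × Staircase (n - m) where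
  toFun f := (leftPart f.1 (firstFixedPoint_eq_iff.1 f.2).1 (firstFixedPoint_eq_iff.1 f.2).2,
    rightPart f.1 m)
  invFun gh := ⟨glue (Nat.lt_succ_iff.1 m.2) gh.1 gh.2, firstFixedPoint_eq_iff.2
    ⟨by rw [app_glue m.2]; simp, fun j hj => by
      rw [app_glue (hj.trans m.2), if_pos hj]; have := gh.1.le_app j; omega⟩⟩
  left_inv f := by
    obtain ⟨hfm, hlt⟩ := firstFixedPoint_eq_iff.1 f.2
    refine Subtype.ext <| ext fun j hj => ?_
    rw [app_glue hj]
    split_ifs with hjm hmj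
    · rw [app_leftPart hjm]; have := hlt j hjm; omega
    · rw [app_rightPart (by omega), show (m : ℕ) + 1 + (j - (m + 1)) = j by omega]
      have := f.1.le_app j; omega
    · rw [show j = m by omega, hfm]
  right_inv gh := by
    refine Prod.ext (ext fun j hj => ?_) (ext fun k hk => ?_)
    · rw [app_leftPart hj, app_glue (by omega), if_pos hj]; rfl
    · rw [app_rightPart hk, app_glue (by omega), if_neg (by omega), if_pos (by omega)]
      simp

theorem card_eq_catalan (n : ℕ) : Nat.card (Staircase n) = catalan n := by
  induction n using Nat.strong_induction_on with
  | _ n ih =>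
  cases n with
  | zero =>
    rw [catalan_zero]
    exact Nat.card_eq_one_iff_unique.2
      ⟨inferInstance, ⟨⟨isEmptyElim, fun i => i.elim0, fun i => i.elim0⟩⟩⟩
  | succ n =>
    rw [← Nat.card_congr (Equiv.sigmaFiberEquiv firstFixedPoint), Nat.card_sigma, catalan_succ]
    refine Finset.sum_congr rfl fun m _ => ?_
    rw [Nat.card_congr (firstFixedPointFiberEquiv m), Nat.card_prod, ih m (by omega),
      ih (n - m) (by omega)]

end Staircase

def RootPoset (n : ℕ) : Type := {p : Fin n × Fin n // p.1 < p.2}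

namespace RootPoset

variable {n : ℕ}

instance : PartialOrder (RootPoset n) where
  le a b := b.1.1 ≤ a.1.1 ∧ a.1.2 ≤ b.1.2
  le_refl _ := ⟨le_rfl, le_rfl⟩
  le_trans _ _ _ hab hbc := ⟨hbc.1.trans hab.1, hab.2.trans hbc.2⟩
  le_antisymm _ _ hab hba :=
    Subtype.ext <| Prod.ext (le_antisymm hba.1 hab.1) (le_antisymm hab.2 hba.2)

instance : Fintype (RootPoset n) := Subtype.fintype _

open scoped Classical

noncomputable def maxEnd (I : LowerSet (RootPoset n)) (i : Fin n) : Fin n :=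
  (univ.filter fun j => j ≤ i ∨ ∃ h : i < j, (⟨(i, j), h⟩ : RootPoset n) ∈ I).max'
    ⟨i, mem_filter.2 ⟨mem_univ _, Or.inl le_rfl⟩⟩

lemma le_maxEnd {I : LowerSet (RootPoset n)} {i j : Fin n}
    (h : j ≤ i ∨ ∃ h : i < j, (⟨(i, j), h⟩ : RootPoset n) ∈ I) : j ≤ maxEnd I i :=
  le_max' _ j (mem_filter.2 ⟨mem_univ _, h⟩)

lemma maxEnd_le_or_mem (I : LowerSet (RootPoset n)) (i : Fin n) :
    maxEnd I i ≤ i ∨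
      ∃ h : i < maxEnd I i, (⟨(i, maxEnd I i), h⟩ : RootPoset n) ∈ I :=
  (mem_filter.1 (max'_mem _ _ : maxEnd I i ∈ _)).2

lemma mem_iff_le_maxEnd {I : LowerSet (RootPoset n)} {p : RootPoset n} :
    p ∈ I ↔ p.1.2 ≤ maxEnd I p.1.1 := by
  refine ⟨fun hp => le_maxEnd (Or.inr ⟨p.2, hp⟩), fun hp => ?_⟩
  obtain hle | ⟨hlt, hmem⟩ := maxEnd_le_or_mem I p.1.1
  · exact absurd (hp.trans hle) p.2.not_ge
  · exact I.lower (a := ⟨(p.1.1, maxEnd I p.1.1), hlt⟩) ⟨le_rfl, hp⟩ hmem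

noncomputable def ofLowerSet (I : LowerSet (RootPoset n)) : Staircase n :=
  ⟨maxEnd I, fun i i' hii' => by
      refine le_maxEnd ((le_or_gt (maxEnd I i) i').imp id fun hlt => ⟨hlt, ?_⟩)
      have hmem : (⟨(i, maxEnd I i), hii'.trans_lt hlt⟩ : RootPoset n) ∈ I :=
        mem_iff_le_maxEnd.2 le_rfl
      exact I.lower (a := ⟨(i, maxEnd I i), _⟩) ⟨hii', le_rfl⟩ hmem,
    fun _ => le_maxEnd (Or.inl le_rfl)⟩

def toLowerSet (f : Staircase n) : LowerSet (RootPoset n) where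
  carrier := {p | p.1.2 ≤ f.1 p.1.1}
  lower' _ _ hba ha := hba.2.trans (ha.trans (f.2.1 hba.1))

noncomputable def lowerSetEquivStaircase : LowerSet (RootPoset n) ≃ Staircase n where
  toFun := ofLowerSet
  invFun := toLowerSet
  left_inv I := SetLike.ext fun _ => (mem_iff_le_maxEnd (I := I)).symm
  right_inv f := Subtype.ext <| funext fun i => eq_of_forall_le_iff fun j => by
    rcases le_or_gt j i with hji | hij
    · exact iff_of_true (hji.trans ((ofLowerSet (toLowerSet f)).2.2 i)) (hji.trans (f.2.2 i))
    · exact (mem_iff_le_maxEnd (I := toLowerSet f) (p := ⟨(i, j), hij⟩)).symm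

end RootPoset

open scoped Classical in
theorem stmt_8_general (n : ℕ) :
    Fintype.card {A : Finset {p : Fin n × Fin n // p.1 < p.2} //
      IsAntichain
        (fun a b : {p : Fin n × Fin n // p.1 < p.2} =>
          b.1.1 ≤ a.1.1 ∧ a.1.2 ≤ b.1.2)
        (A : Set {p : Fin n × Fin n // p.1 < p.2})} =
    Nat.choose (2 * n) n / (n + 1) := by
  rw [Fintype.card_eq_nat_card, ← Nat.centralBinom_eq_two_mul_choose,
    ← catalan_eq_centralBinom_div, ← Staircase.card_eq_catalan]
  exact Nat.card_congr
    ((finsetAntichainEquivLowerSet (RootPoset n)).trans RootPoset.lowerSetEquivStaircase)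

open scoped Classical in
/-- the number of antichains in the type `A_{n-1}` root poset
`P_n = {(i,j) : i < j}` with `(i,j) ≤ (k,l)` iff `k ≤ i` and `j ≤ l`
equals the Catalan number `C_n = (1/(n+1)) * binom(2n, n)`. -/
theorem stmt_8 (n : ℕ) (hn : 2 ≤ n) :
    Fintype.card {A : Finset {p : Fin n × Fin n // p.1 < p.2} //
      IsAntichain
        (fun a b : {p : Fin n × Fin n // p.1 < p.2} =>
          b.1.1 ≤ a.1.1 ∧ a.1.2 ≤ b.1.2)
        (A : Set {p : Fin n × Fin n // p.1 < p.2})} =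
    Nat.choose (2 * n) n / (n + 1) :=
  stmt_8_general n
end

section
/- Fix n ≥ 1. For an interval s = [a,b] with 1 ≤ a ≤ b ≤ n, define the linear functional α_s(x) = Σ_{i=a}^{b} x_i on ℝ^n, and define the shard Σ(s) = { x ∈ ℝ^n : α_{[a,b]}(x) = 0, α_{[a,c]}(x) ≥ 0 for all a ≤ c ≤ b, and α_{[c,b]}(x) ≤ 0 for all a ≤ c ≤ b }. Then for all 1 ≤ a ≤ b < d ≤ n, setting s = [a,b], t = [b+1,d], u = [a,d], one has Σ(s) ∩ Σ(t) = Σ(s) ∩ Σ(u) = Σ(t) ∩ Σ(u). -/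
/-- The linear functional `α_{[a,b]}(x) = ∑_{i ∈ [a,b]} x i`. -/
def alphaI (n : ℕ) (a b : Fin n) (x : Fin n → ℝ) : ℝ :=
  ∑ i ∈ Finset.Icc a b, x i

/-- The shard `Σ([a,b])`: the cone in the hyperplane `α_{[a,b]} = 0` where all
prefix functionals are nonnegative and all suffix functionals are nonpositive. -/
def shard (n : ℕ) (a b : Fin n) : Set (Fin n → ℝ) :=
  {x | alphaI n a b x = 0 ∧
    (∀ c : Fin n, a ≤ c → c ≤ b → 0 ≤ alphaI n a c x) ∧
    (∀ c : Fin n, a ≤ c → c ≤ b → alphaI n c b x ≤ 0)}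

/-! Every prefix or suffix of the concatenation `[a,d]` of `[a,b]` and `[c,d]` either lies in
one of the two pieces or splits as a full piece plus a prefix (suffix) of the other, so by
additivity of `α` the sign conditions of any two of the three shards give those of the third. -/

namespace Fin

theorem le_or_le_of_val_add_one_eq {n : ℕ} {b c : Fin n} (hbc : (b : ℕ) + 1 = c) (e : Fin n) :
    e ≤ b ∨ c ≤ e := by
  rw [Fin.le_def, Fin.le_def]
  omega

end Fin

section Concatenation

variable {n : ℕ} {a b c d : Fin n}

theorem alphaI_add_alphaI (hab : a ≤ b) (hbc : (b : ℕ) + 1 = c) (hcd : c ≤ d)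
    (x : Fin n → ℝ) : alphaI n a b x + alphaI n c d x = alphaI n a d x := by
  unfold alphaI
  rw [← Finset.sum_union]
  · congr 1
    ext i
    simp only [Finset.mem_union, Finset.mem_Icc, Fin.le_def] at *
    omega
  · rw [Finset.disjoint_left]
    intro i hi hi'
    simp only [Finset.mem_Icc, Fin.le_def] at hi hi'
    omega

theorem shard_inter_shard_subset_shard_concat (hab : a ≤ b) (hbc : (b : ℕ) + 1 = c)
    (hcd : c ≤ d) :
    shard n a b ∩ shard n c d ⊆ shard n a d := by
  rintro x ⟨⟨hs, hsPre, hsSuf⟩, ht, htPre, htSuf⟩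
  refine ⟨by rw [← alphaI_add_alphaI hab hbc hcd]; linarith, fun e hae hed => ?_,
    fun e hae hed => ?_⟩
  · rcases Fin.le_or_le_of_val_add_one_eq hbc e with heb | hce
    · exact hsPre e hae heb
    · rw [← alphaI_add_alphaI hab hbc hce]
      linarith [htPre e hce hed]
  · rcases Fin.le_or_le_of_val_add_one_eq hbc e with heb | hce
    · rw [← alphaI_add_alphaI heb hbc hcd]
      linarith [hsSuf e hae heb]
    · exact htSuf e hce hed

theorem shard_inter_shard_concat_subset_shard_right (hab : a ≤ b) (hbc : (b : ℕ) + 1 = c)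
    (hcd : c ≤ d) :
    shard n a b ∩ shard n a d ⊆ shard n c d := by
  rintro x ⟨⟨hs, -, -⟩, hu, huPre, huSuf⟩
  rw [← alphaI_add_alphaI hab hbc hcd] at hu
  have hae : ∀ e, c ≤ e → a ≤ e := fun e hce => by rw [Fin.le_def] at *; omega
  refine ⟨by linarith, fun e hce hed => ?_, fun e hce hed => huSuf e (hae e hce) hed⟩
  have := huPre e (hae e hce) hed
  rw [← alphaI_add_alphaI hab hbc hce] at this
  linarith

theorem shard_inter_shard_concat_subset_shard_left (hab : a ≤ b) (hbc : (b : ℕ) + 1 = c)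
    (hcd : c ≤ d) :
    shard n c d ∩ shard n a d ⊆ shard n a b := by
  rintro x ⟨⟨ht, -, -⟩, hu, huPre, huSuf⟩
  rw [← alphaI_add_alphaI hab hbc hcd] at hu
  have hed : ∀ e, e ≤ b → e ≤ d := fun e heb => by rw [Fin.le_def] at *; omega
  refine ⟨by linarith, fun e hae heb => huPre e hae (hed e heb), fun e hae heb => ?_⟩
  have := huSuf e hae (hed e heb)
  rw [← alphaI_add_alphaI heb hbc hcd] at this
  linarith

end Concatenation

theorem stmt_10_general (n : ℕ) (a b c d : Fin n)
    (hab : a ≤ b) (hbc : (b : ℕ) + 1 = (c : ℕ)) (hcd : c ≤ d) :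
    shard n a b ∩ shard n c d = shard n a b ∩ shard n a d ∧
    shard n a b ∩ shard n c d = shard n c d ∩ shard n a d := by
  have hst := shard_inter_shard_subset_shard_concat hab hbc hcd
  have hsu := shard_inter_shard_concat_subset_shard_right hab hbc hcd
  have htu := shard_inter_shard_concat_subset_shard_left hab hbc hcd
  refine ⟨Set.inter_eq_inter_iff_left.2 ⟨hsu, hst⟩, ?_⟩
  rw [Set.inter_comm (shard n c d), Set.inter_eq_inter_iff_right, Set.inter_comm (shard n a d)]
  exact ⟨htu, hst⟩

/-- for `s = [a,b]`, `t = [b+1,d]`, `u = [a,d]`, any two of the three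
shards `Σ(s), Σ(t), Σ(u)` have the same intersection. -/
theorem stmt_10 (n : ℕ) (hn : 1 ≤ n) (a b c d : Fin n)
    (hab : a ≤ b) (hbc : (b : ℕ) + 1 = (c : ℕ)) (hcd : c ≤ d) :
    shard n a b ∩ shard n c d = shard n a b ∩ shard n a d ∧
    shard n a b ∩ shard n c d = shard n c d ∩ shard n a d :=
  stmt_10_general n a b c d hab hbc hcd
end

section
/- Fix n ≥ 1. For an interval s = [a,b] ⊆ [n], define α_s(x) = Σ_{i=a}^{b} x_i and Σ(s) = { x ∈ ℝ^n : α_{[a,b]}(x) = 0, α_{[a,c]}(x) ≥ 0 for all a ≤ c ≤ b, α_{[c,b]}(x) ≤ 0 for all a ≤ c ≤ b }. Suppose s = [a,b] and t = [c,d] are intervals with c ≤ a ≤ d ≤ b, and set u = [a,d]. Then Σ(s) ∩ Σ(t) ⊆ Σ(u). -/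
section

variable {n : ℕ} {a b c : Fin n} {x : Fin n → ℝ}

lemma alphaI_prefix_nonneg_of_mem_shard (hx : x ∈ shard n a b) (hac : a ≤ c) (hcb : c ≤ b) :
    0 ≤ alphaI n a c x :=
  hx.2.1 c hac hcb

lemma alphaI_suffix_nonpos_of_mem_shard (hx : x ∈ shard n a b) (hac : a ≤ c) (hcb : c ≤ b) :
    alphaI n c b x ≤ 0 :=
  hx.2.2 c hac hcb

end

theorem stmt_11_general (n : ℕ) (a b c d : Fin n)
    (hca : c ≤ a) (had : a ≤ d) (hdb : d ≤ b) :
    shard n a b ∩ shard n c d ⊆ shard n a d := by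
  rintro x ⟨hs, ht⟩
  -- Prefixes of `[a,d]` are prefixes of `[a,b]`, suffixes of `[a,d]` are suffixes of `[c,d]`,
  -- and `[a,d]` itself is both, so `α_{[a,d]}` is squeezed to `0`.
  exact ⟨le_antisymm (alphaI_suffix_nonpos_of_mem_shard ht hca had)
      (alphaI_prefix_nonneg_of_mem_shard hs had hdb),
    fun e hae hed => alphaI_prefix_nonneg_of_mem_shard hs hae (hed.trans hdb),
    fun e hae hed => alphaI_suffix_nonpos_of_mem_shard ht (hca.trans hae) hed⟩

/-- if `s = [a,b]` and `t = [c,d]` with `c ≤ a ≤ d ≤ b` (so that they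
are friendly along `u = [a,d]`), then `Σ(s) ∩ Σ(t) ⊆ Σ(u)`. -/
theorem stmt_11 (n : ℕ) (hn : 1 ≤ n) (a b c d : Fin n)
    (hca : c ≤ a) (had : a ≤ d) (hdb : d ≤ b) :
    shard n a b ∩ shard n c d ⊆ shard n a d :=
  stmt_11_general n a b c d hca had hdb
end
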